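/- arXiv:2006.07603 — 5 statements merged into one kernel-verified Lean document; each statement's English description precedes it below -/
import Mathlib

section
/- Let C be an (n,2) binary code (4 codewords c1,...,c4) whose first column equals [0,0,0,1]^T, and let C' be obtained from C by replacing this first column with [0,0,1,1]^T. If the Hamming distance w(c3 ⊕ c4) is even, then the average ML correct-decoding probability of C' over a BSC with crossover probability ε ∈ (0, 1/2) is at least that of C. -/
open Finset

/-- Minimum Hamming distance from `y` to the 4 rows (codewords) of `C`. -/
def dmin {m : ℕ} (C : Fin 4 → Fin m → ZMod 2) (y : Fin m → ZMod 2) : ℕ :=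
  Finset.univ.inf' ⟨0, Finset.mem_univ 0⟩ (fun i => hammingDist (C i) y)

/-- Number of outputs at min-distance `d` from the code `C`. -/
def alpha {m : ℕ} (C : Fin 4 → Fin m → ZMod 2) (d : ℕ) : ℕ :=
  (Finset.univ.filter (fun y : Fin m → ZMod 2 => dmin C y = d)).card

/-- Average ML correct decoding probability of `C` on a BSC with crossover `ε`. -/
noncomputable def lam {m : ℕ} (C : Fin 4 → Fin m → ZMod 2) (ε : ℝ) : ℝ :=
  (1/4) * ∑ d ∈ Finset.range (m+1), (alpha C d : ℝ) * (1-ε)^(m-d) * ε^d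

/-- The column pattern (in `{0,1}^4`) associated with the integer `i`,
row 1 being the most significant bit. -/
def pat (i : ℕ) : Fin 4 → ZMod 2 := fun j => if Nat.testBit i (3 - (j : ℕ)) then 1 else 0

/-- Number of columns of `C` equal to the pattern `p`. -/
def colCount {m : ℕ} (C : Fin 4 → Fin m → ZMod 2) (p : Fin 4 → ZMod 2) : ℕ :=
  (Finset.univ.filter (fun k : Fin m => (fun i => C i k) = p)).card

/-- A code is linear if its set of codewords is a subgroup of `({0,1}^n, ⊕)`. -/
def IsLinearCode {m : ℕ} (C : Fin 4 → Fin m → ZMod 2) : Prop :=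
  ∃ H : AddSubgroup (Fin m → ZMod 2), Set.range C = (H : Set (Fin m → ZMod 2))

/-- `w_i(y)`: number of positions with column pattern `i` where `y` is 1. -/
def wcount {m : ℕ} (C : Fin 4 → Fin m → ZMod 2) (i : ℕ) (y : Fin m → ZMod 2) : ℕ :=
  (Finset.univ.filter (fun k : Fin m => (fun r => C r k) = pat i ∧ y k = 1)).card

/-!
Split an output `y` into its first bit and its tail `y'`, and let `Dᵢ` be the distance from `y'`
to the tail of `cᵢ` (the same for `C` and `C'`). With `a = min D₁ D₂`, the outputs `(0, y')` and
`(1, y')` are at distances `min a D₃ (D₄+1)` and `min (a+1) (D₃+1) D₄` from `C`, and at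
`min a (D₃+1) (D₄+1)` and `min (a+1) D₃ D₄` from `C'`. Because `w(c₃ ⊕ c₄)` is even and the first
column separates `c₃` from `c₄`, their tails are at odd distance, so `D₃ ≠ D₄`; then a short case
analysis shows that the sum of the two weights `(1-ε)^(n-d) ε^d`, antitone in `d` for `ε ≤ 1/2`,
can only grow from `C` to `C'`.
-/

section Hamming

variable {ι β : Type*} [Fintype ι] [DecidableEq β]

theorem hammingDist_eq_tail_add {n : ℕ} (x y : Fin (n + 1) → β) :
    hammingDist x y = hammingDist (Fin.tail x) (Fin.tail y) + if x 0 = y 0 then 0 else 1 := by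
  rw [hammingDist, Fin.card_filter_univ_succ', ite_not, add_comm]
  rfl

theorem natCast_hammingDist_zmod_two (x y : ι → ZMod 2) :
    (hammingDist x y : ZMod 2) = ∑ i, (x i + y i) := by
  rw [hammingDist, Finset.card_filter, Nat.cast_sum]
  refine Finset.sum_congr rfl fun i _ => ?_
  generalize x i = a; generalize y i = b
  revert a b; decide

theorem hammingDist_ne_of_odd {x z : ι → ZMod 2} (h : Odd (hammingDist x z)) (y : ι → ZMod 2) :
    hammingDist x y ≠ hammingDist z y := by
  intro hxy
  have : (hammingDist x z : ZMod 2) = 2 * hammingDist x y := by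
    rw [two_mul]
    nth_rw 2 [hxy]
    simp only [natCast_hammingDist_zmod_two, ← Finset.sum_add_distrib]
    refine Finset.sum_congr rfl fun i _ => ?_
    generalize x i = a; generalize y i = b; generalize z i = c
    revert a b c; decide
  rw [show (2 : ZMod 2) = 0 from rfl, zero_mul, ZMod.natCast_eq_zero_iff_even] at this
  exact Nat.not_even_iff_odd.mpr h this

end Hamming

theorem Fintype.sum_fin_succ_pi {β M : Type*} [Fintype β] [AddCommMonoid M] {n : ℕ}
    (F : (Fin (n + 1) → β) → M) : ∑ y, F y = ∑ y : Fin n → β, ∑ b, F (Fin.cons b y) := by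
  rw [← (Fin.consEquiv fun _ => β).sum_comp, Fintype.sum_prod_type, Finset.sum_comm]
  rfl

theorem Antitone.add_le_add_min_swap {f : ℕ → ℝ} (hf : Antitone f) {a u v : ℕ} (huv : u ≠ v) :
    f (min a (min u (v + 1))) + f (min (a + 1) (min (u + 1) v))
      ≤ f (min a (min (u + 1) (v + 1))) + f (min (a + 1) (min u v)) := by
  by_cases h : min a (v + 1) ≤ u
  · rw [show min a (min u (v + 1)) = min a (min (u + 1) (v + 1)) by omega]
    exact add_le_add_right (hf (by omega)) _
  · rw [show min a (min u (v + 1)) = u by omega, show min (a + 1) (min (u + 1) v) = u + 1 by omega,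
      show min a (min (u + 1) (v + 1)) = u + 1 by omega, show min (a + 1) (min u v) = u by omega,
      add_comm]

section Code

variable {m : ℕ}

theorem dmin_eq_min (C : Fin 4 → Fin m → ZMod 2) (y : Fin m → ZMod 2) :
    dmin C y = min (min (hammingDist (C 0) y) (hammingDist (C 1) y))
      (min (hammingDist (C 2) y) (hammingDist (C 3) y)) := by
  refine le_antisymm (le_min (le_min (Finset.inf'_le _ (Finset.mem_univ 0))
      (Finset.inf'_le _ (Finset.mem_univ 1)))
      (le_min (Finset.inf'_le _ (Finset.mem_univ 2)) (Finset.inf'_le _ (Finset.mem_univ 3))))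
    (Finset.le_inf' _ _ fun i _ => ?_)
  fin_cases i <;> simp

theorem dmin_le (C : Fin 4 → Fin m → ZMod 2) (y : Fin m → ZMod 2) : dmin C y ≤ m :=
  (Finset.inf'_le _ (Finset.mem_univ 0)).trans
    (by simpa using hammingDist_le_card_fintype (x := C 0) (y := y))

def bscWeight (m : ℕ) (ε : ℝ) (d : ℕ) : ℝ := (1 - ε) ^ (m - d) * ε ^ d

theorem bscWeight_antitone {ε : ℝ} (h0 : 0 ≤ ε) (h : ε ≤ 1 / 2) : Antitone (bscWeight m ε) := by
  refine antitone_nat_of_succ_le fun d => ?_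
  unfold bscWeight
  rcases lt_or_ge d m with hd | hd
  · obtain ⟨k, rfl⟩ := Nat.exists_eq_add_of_lt hd
    rw [show d + k + 1 - d = k + 1 by omega, show d + k + 1 - (d + 1) = k by omega]
    have : 0 ≤ 1 - ε := by linarith
    calc (1 - ε) ^ k * ε ^ (d + 1) = (1 - ε) ^ k * ε ^ d * ε := by ring
      _ ≤ (1 - ε) ^ k * ε ^ d * (1 - ε) := by gcongr; linarith
      _ = (1 - ε) ^ (k + 1) * ε ^ d := by ring
  · rw [Nat.sub_eq_zero_of_le hd, Nat.sub_eq_zero_of_le (by omega), pow_zero, one_mul, one_mul,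
      pow_succ]
    exact mul_le_of_le_one_right (by positivity) (by linarith)

theorem lam_eq_sum (C : Fin 4 → Fin m → ZMod 2) (ε : ℝ) :
    lam C ε = 1 / 4 * ∑ y, bscWeight m ε (dmin C y) := by
  unfold lam alpha
  rw [← Finset.sum_fiberwise_of_maps_to (g := dmin C)
    (fun y _ => Finset.mem_range.mpr (Nat.lt_succ_of_le (dmin_le C y)))]
  congr 1
  refine Finset.sum_congr rfl fun d _ => ?_
  rw [Finset.sum_congr rfl fun y hy => by rw [(Finset.mem_filter.mp hy).2], Finset.sum_const,
    nsmul_eq_mul, bscWeight, mul_assoc]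

end Code

theorem sum_dmin_cons_le {m : ℕ} {f : ℕ → ℝ} (hf : Antitone f)
    {C C' : Fin 4 → Fin (m + 1) → ZMod 2}
    (hC : ∀ i, C i 0 = pat 1 i) (hC' : ∀ i, C' i 0 = pat 3 i)
    (htail : ∀ i, Fin.tail (C' i) = Fin.tail (C i))
    (hodd : Odd (hammingDist (Fin.tail (C 2)) (Fin.tail (C 3)))) (y : Fin m → ZMod 2) :
    ∑ b, f (dmin C (Fin.cons b y)) ≤ ∑ b, f (dmin C' (Fin.cons b y)) := by
  have key := hf.add_le_add_min_swap
    (a := min (hammingDist (Fin.tail (C 0)) y) (hammingDist (Fin.tail (C 1)) y))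
    (hammingDist_ne_of_odd hodd y)
  simp only [dmin_eq_min, hammingDist_eq_tail_add (C _), hammingDist_eq_tail_add (C' _),
    Fin.tail_cons, Fin.cons_zero, hC, hC', htail]
  have hp1 : pat 1 = ![0, 0, 0, 1] := by decide
  have hp3 : pat 3 = ![0, 0, 1, 1] := by decide
  simp only [show ∀ g : ZMod 2 → ℝ, ∑ b, g b = g 0 + g 1 from Fin.sum_univ_two, hp1, hp3]
  simpa using key

/-- Theorem 1 of the paper (case `s=3`, `t=4`, column `[0001] → [0011]`): if
`w(c3 ⊕ c4)` is even, replacing a column of type `[0,0,0,1]ᵀ` by `[0,0,1,1]ᵀ`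
does not decrease the ML correct decoding probability. -/
theorem stmt5 (n : ℕ) (C C' : Fin 4 → Fin (n+1) → ZMod 2)
    (hcol : (fun i => C i 0) = pat 1)
    (heven : Even (hammingDist (C 2) (C 3)))
    (hC' : C' = fun i j => if j = 0 then pat 3 i else C i j)
    (ε : ℝ) (hε1 : 0 < ε) (hε2 : ε < 1/2) :
    lam C ε ≤ lam C' ε := by
  have hC : ∀ i, C i 0 = pat 1 i := congrFun hcol
  have hC'0 : ∀ i, C' i 0 = pat 3 i := by simp [hC']
  have htail : ∀ i, Fin.tail (C' i) = Fin.tail (C i) := by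
    intro i; funext k; simp [hC', Fin.tail, Fin.succ_ne_zero]
  have hodd : Odd (hammingDist (Fin.tail (C 2)) (Fin.tail (C 3))) := by
    rw [hammingDist_eq_tail_add, hC, hC, if_neg (by decide)] at heven
    exact Nat.not_even_iff_odd.mp (Nat.even_add_one.mp heven)
  rw [lam_eq_sum, lam_eq_sum, Fintype.sum_fin_succ_pi, Fintype.sum_fin_succ_pi]
  exact mul_le_mul_of_nonneg_left (Finset.sum_le_sum fun y _ =>
    sum_dmin_cons_le (bscWeight_antitone hε1.le hε2.le) hC hC'0 htail hodd y) (by norm_num)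
end

section
/- Let C be an (n,2) binary code whose first two columns are [0,0,0,1]^T and [0,1,1,1]^T, and let C' be the code obtained by flipping the first two bits of codeword c3 (so the first two columns of C' are [0,0,1,1]^T and [0,1,0,1]^T). Then for every ε ∈ (0,1/2), λ_{C'} ≥ λ_C. -/
open Finset

/- ################ auxiliary definitions for the proof ################ -/

/-- Contribution of the first two coordinates to a Hamming distance. -/
def pre2 (a b c d : ZMod 2) : ℕ := (if a = c then 0 else 1) + (if b = d then 0 else 1)

/-- Contribution of the remaining coordinates to a Hamming distance. -/
def tcnt {n : ℕ} (a y : Fin (n+2) → ZMod 2) : ℕ :=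
  ∑ k ∈ Finset.univ.filter (fun k : Fin (n+2) => ¬(k = 0 ∨ k = 1)),
    (if a k = y k then 0 else 1)

/-- Swap the first two coordinates. -/
def swp {n : ℕ} (y : Fin (n+2) → ZMod 2) : Fin (n+2) → ZMod 2 :=
  fun k => if k = 0 then y 1 else if k = 1 then y 0 else y k

lemma fin01 {n : ℕ} : (0 : Fin (n+2)) ≠ 1 := by
  simp [Fin.ext_iff]

@[simp] lemma swp_zero {n : ℕ} (y : Fin (n+2) → ZMod 2) : swp y 0 = y 1 := by
  simp [swp]

@[simp] lemma swp_one {n : ℕ} (y : Fin (n+2) → ZMod 2) : swp y 1 = y 0 := by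
  simp [swp, (fin01 (n := n)).symm]

lemma swp_ne {n : ℕ} (y : Fin (n+2) → ZMod 2) (k : Fin (n+2)) (h0 : k ≠ 0) (h1 : k ≠ 1) :
    swp y k = y k := by
  simp [swp, h0, h1]

lemma swp_swp {n : ℕ} (y : Fin (n+2) → ZMod 2) : swp (swp y) = y := by
  funext k
  rcases eq_or_ne k 0 with rfl | h0
  · rw [swp_zero, swp_one]
  rcases eq_or_ne k 1 with rfl | h1
  · rw [swp_one, swp_zero]
  · rw [swp_ne _ _ h0 h1, swp_ne _ _ h0 h1]

lemma ham_split {n : ℕ} (a y : Fin (n+2) → ZMod 2) :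
    hammingDist a y = pre2 (a 0) (a 1) (y 0) (y 1) + tcnt a y := by
  have h1 : hammingDist a y = ∑ k : Fin (n+2), (if a k = y k then 0 else 1) := by
    unfold hammingDist
    rw [Finset.card_filter]
    exact Finset.sum_congr rfl fun k _ => by by_cases h : a k = y k <;> simp [h]
  rw [h1, ← Finset.sum_filter_add_sum_filter_not Finset.univ
      (fun k : Fin (n+2) => k = 0 ∨ k = 1)]
  congr 1
  have hset : Finset.univ.filter (fun k : Fin (n+2) => k = 0 ∨ k = 1)
      = ({0, 1} : Finset (Fin (n+2))) := by
    ext k; simp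
  rw [hset, Finset.sum_insert (by simp [Fin.ext_iff]), Finset.sum_singleton]
  rfl

lemma tcnt_congr {n : ℕ} {a a' y y' : Fin (n+2) → ZMod 2}
    (ha : ∀ k : Fin (n+2), k ≠ 0 → k ≠ 1 → a' k = a k)
    (hy : ∀ k : Fin (n+2), k ≠ 0 → k ≠ 1 → y' k = y k) :
    tcnt a' y' = tcnt a y := by
  unfold tcnt
  refine Finset.sum_congr rfl fun k hk => ?_
  simp only [Finset.mem_filter, not_or] at hk
  rw [ha k hk.2.1 hk.2.2, hy k hk.2.1 hk.2.2]

/-- Theorem 2 of the paper (first case): if the first two columns of `C` are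
`[0,0,0,1]ᵀ` and `[0,1,1,1]ᵀ`, flipping the first two bits of codeword `c3`
(giving first two columns `[0,0,1,1]ᵀ` and `[0,1,0,1]ᵀ`) does not decrease λ. -/
theorem stmt6 (n : ℕ) (C C' : Fin 4 → Fin (n+2) → ZMod 2)
    (hcol0 : (fun i => C i 0) = pat 1)
    (hcol1 : (fun i => C i 1) = pat 7)
    (hC' : C' = fun i j => if i = 2 ∧ (j = 0 ∨ j = 1) then C i j + 1 else C i j)
    (ε : ℝ) (hε1 : 0 < ε) (hε2 : ε < 1/2) :
    lam C ε ≤ lam C' ε := by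
  have z2 : ∀ a : ZMod 2, a = 0 ∨ a = 1 := by decide
  have hrow : ∀ i : Fin 4, C i 0 = pat 1 i ∧ C i 1 = pat 7 i :=
    fun i => ⟨congrFun hcol0 i, congrFun hcol1 i⟩
  have h20 : C 2 0 = 0 := (hrow 2).1.trans (by decide)
  have h21 : C 2 1 = 1 := (hrow 2).2.trans (by decide)
  have hC'ne : ∀ i : Fin 4, i ≠ 2 → C' i = C i := by
    intro i hi; funext j; rw [hC']; simp [hi]
  have hC'2k : ∀ k : Fin (n+2), k ≠ 0 → k ≠ 1 → C' 2 k = C 2 k := by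
    intro k hk0 hk1; rw [hC']; simp [hk0, hk1]
  have hC'20 : C' 2 0 = 1 := by
    rw [hC']; simp [h20]
  have hC'21 : C' 2 1 = 0 := by
    rw [hC']; simp [h21, show (1 + 1 : ZMod 2) = 0 by decide]
  have ht' : ∀ (i : Fin 4) (y : Fin (n+2) → ZMod 2), tcnt (C' i) y = tcnt (C i) y := by
    intro i y
    rcases eq_or_ne i 2 with rfl | hi
    · exact tcnt_congr (fun k hk0 hk1 => hC'2k k hk0 hk1) (fun _ _ _ => rfl)
    · rw [hC'ne i hi]
  have htsw : ∀ (a y : Fin (n+2) → ZMod 2), tcnt a (swp y) = tcnt a y :=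
    fun a y => tcnt_congr (fun _ _ _ => rfl) (swp_ne y)
  -- basic dmin facts
  have dmin_le : ∀ (X : Fin 4 → Fin (n+2) → ZMod 2) (y : Fin (n+2) → ZMod 2) (i : Fin 4),
      dmin X y ≤ hammingDist (X i) y := by
    intro X y i
    exact Finset.inf'_le _ (Finset.mem_univ i)
  have dmin_attain : ∀ (X : Fin 4 → Fin (n+2) → ZMod 2) (y : Fin (n+2) → ZMod 2),
      ∃ i : Fin 4, dmin X y = hammingDist (X i) y := by
    intro X y
    obtain ⟨i, -, h⟩ := Finset.exists_mem_eq_inf'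
      (⟨0, Finset.mem_univ 0⟩ : (Finset.univ : Finset (Fin 4)).Nonempty)
      (fun i => hammingDist (X i) y)
    exact ⟨i, h⟩
  have key : ∀ (X Y : Fin 4 → Fin (n+2) → ZMod 2) (w z : Fin (n+2) → ZMod 2),
      (∀ i, hammingDist (X i) w ≤ hammingDist (Y i) z) → dmin X w ≤ dmin Y z := by
    intro X Y w z h
    obtain ⟨i, hi⟩ := dmin_attain Y z
    rw [hi]
    exact le_trans (dmin_le X w i) (h i)
  have hcard : ∀ (X : Fin 4 → Fin (n+2) → ZMod 2) (y : Fin (n+2) → ZMod 2),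
      dmin X y ≤ n + 2 := by
    intro X y
    refine le_trans (dmin_le X y 0) (le_trans hammingDist_le_card_fintype ?_)
    simp
  -- monotonicity of the weight function
  have Fmono : ∀ d' d : ℕ, d' ≤ d → d ≤ n+2 →
      (1-ε)^(n+2-d) * ε^d ≤ (1-ε)^(n+2-d') * ε^d' := by
    intro d' d h hd
    have h1 : ε ^ d = ε ^ d' * ε ^ (d - d') := by rw [← pow_add]; congr 1; omega
    have h2 : (1-ε)^(n+2-d') = (1-ε)^(n+2-d) * (1-ε)^(d-d') := by
      rw [← pow_add]; congr 1; omega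
    have hk : ε ^ (d-d') ≤ (1-ε)^(d-d') := pow_le_pow_left₀ hε1.le (by linarith) _
    have hnn : (0:ℝ) ≤ (1-ε)^(n+2-d) * ε ^ d' :=
      mul_nonneg (pow_nonneg (by linarith) _) (pow_nonneg hε1.le _)
    calc (1-ε)^(n+2-d) * ε^d = ((1-ε)^(n+2-d) * ε^d') * ε^(d-d') := by rw [h1]; ring
      _ ≤ ((1-ε)^(n+2-d) * ε^d') * (1-ε)^(d-d') := mul_le_mul_of_nonneg_left hk hnn
      _ = (1-ε)^(n+2-d') * ε^d' := by rw [h2]; ring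
  -- equal prefixes case
  have dminEq : ∀ y : Fin (n+2) → ZMod 2, y 0 = y 1 → dmin C' y = dmin C y := by
    intro y h
    have hf : ∀ i, hammingDist (C' i) y = hammingDist (C i) y := by
      intro i
      rcases eq_or_ne i 2 with rfl | hi
      · rw [ham_split, ham_split, ht', h20, h21, hC'20, hC'21, h]
        rcases z2 (y 1) with h1 | h1 <;> rw [h1] <;>
          exact congrArg (· + tcnt (C 2) y) (by decide)
      · rw [hC'ne i hi]
    exact le_antisymm (key C' C y y fun i => (hf i).le) (key C C' y y fun i => (hf i).ge)
  have hall3 : ∀ i : Fin 4, pre2 (pat 1 i) (pat 7 i) 0 1 ≤ pre2 (pat 1 i) (pat 7 i) 1 0 := by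
    decide
  -- the pairwise inequality for prefix (0,1)
  have hpair01 : ∀ y : Fin (n+2) → ZMod 2, y 0 = 0 → y 1 = 1 →
      (1-ε)^(n+2-dmin C y) * ε^(dmin C y)
        + (1-ε)^(n+2-dmin C (swp y)) * ε^(dmin C (swp y))
      ≤ (1-ε)^(n+2-dmin C' y) * ε^(dmin C' y)
        + (1-ε)^(n+2-dmin C' (swp y)) * ε^(dmin C' (swp y)) := by
    intro y hy0 hy1
    have hs0 : swp y 0 = 1 := by rw [swp_zero, hy1]
    have hs1 : swp y 1 = 0 := by rw [swp_one, hy0]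
    have fact2' : ∀ i, hammingDist (C' i) (swp y) ≤ hammingDist (C i) (swp y) := by
      intro i
      rcases eq_or_ne i 2 with rfl | hi
      · rw [ham_split, ham_split, ht', hs0, hs1, h20, h21, hC'20, hC'21]
        exact Nat.add_le_add_right (by decide) _
      · rw [hC'ne i hi]
    have fact3' : ∀ i, hammingDist (C' i) y ≤ hammingDist (C i) (swp y) := by
      intro i
      rw [ham_split, ham_split, htsw, hy0, hy1, hs0, hs1]
      rcases eq_or_ne i 2 with rfl | hi
      · rw [ht', h20, h21, hC'20, hC'21]
        exact Nat.add_le_add_right (by decide) _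
      · rw [hC'ne i hi, (hrow i).1, (hrow i).2]
        exact Nat.add_le_add_right (hall3 i) _
    have factm : ∀ i, hammingDist (C i) y ≤ hammingDist (C' i) y := by
      intro i
      rcases eq_or_ne i 2 with rfl | hi
      · rw [ham_split, ham_split, ht', hy0, hy1, h20, h21, hC'20, hC'21]
        exact Nat.add_le_add_right (by decide) _
      · rw [hC'ne i hi]
    have hswap2 : hammingDist (C' 2) (swp y) = hammingDist (C 2) y := by
      rw [ham_split, ham_split, ht', htsw, hs0, hs1, hy0, hy1, h20, h21, hC'20, hC'21]
      rw [show pre2 1 0 1 0 = pre2 0 1 0 1 from by decide]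
    have hA'B : dmin C' y ≤ dmin C (swp y) := key C' C y (swp y) fact3'
    have hB'B : dmin C' (swp y) ≤ dmin C (swp y) := key C' C (swp y) (swp y) fact2'
    have hAA' : dmin C y ≤ dmin C' y := key C C' y y factm
    have hminor : dmin C' y ≤ dmin C y ∨ dmin C' (swp y) ≤ dmin C y := by
      obtain ⟨j, hj⟩ := dmin_attain C y
      rcases eq_or_ne j 2 with rfl | hne
      · right; rw [hj, ← hswap2]; exact dmin_le C' (swp y) 2
      · left; rw [hj]
        calc dmin C' y ≤ hammingDist (C' j) y := dmin_le C' y j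
          _ = hammingDist (C j) y := by rw [hC'ne j hne]
    rcases hminor with h | h
    · have hAeq : dmin C' y = dmin C y := le_antisymm h hAA'
      have h2 : (1-ε)^(n+2-dmin C (swp y)) * ε^(dmin C (swp y))
          ≤ (1-ε)^(n+2-dmin C' (swp y)) * ε^(dmin C' (swp y)) :=
        Fmono _ _ hB'B (hcard C (swp y))
      rw [hAeq]; linarith
    · have h1 : (1-ε)^(n+2-dmin C y) * ε^(dmin C y)
          ≤ (1-ε)^(n+2-dmin C' (swp y)) * ε^(dmin C' (swp y)) :=
        Fmono _ _ h (hcard C y)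
      have h2 : (1-ε)^(n+2-dmin C (swp y)) * ε^(dmin C (swp y))
          ≤ (1-ε)^(n+2-dmin C' y) * ε^(dmin C' y) :=
        Fmono _ _ hA'B (hcard C (swp y))
      linarith
  -- the pairwise inequality in general
  have hpair : ∀ y : Fin (n+2) → ZMod 2,
      (1-ε)^(n+2-dmin C y) * ε^(dmin C y)
        + (1-ε)^(n+2-dmin C (swp y)) * ε^(dmin C (swp y))
      ≤ (1-ε)^(n+2-dmin C' y) * ε^(dmin C' y)
        + (1-ε)^(n+2-dmin C' (swp y)) * ε^(dmin C' (swp y)) := by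
    intro y
    rcases eq_or_ne (y 0) (y 1) with heq | hne
    · have hsw : swp y 0 = swp y 1 := by rw [swp_zero, swp_one, heq]
      rw [dminEq y heq, dminEq (swp y) hsw]
    · rcases z2 (y 0) with h0 | h0
      · have h1 : y 1 = 1 := by
          rcases z2 (y 1) with h1 | h1
          · exact absurd (h0.trans h1.symm) hne
          · exact h1
        exact hpair01 y h0 h1
      · have h1 : y 1 = 0 := by
          rcases z2 (y 1) with h1 | h1
          · exact h1
          · exact absurd (h0.trans h1.symm) hne
        have hs0 : swp y 0 = 0 := by rw [swp_zero, h1]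
        have hs1 : swp y 1 = 1 := by rw [swp_one, h0]
        have t := hpair01 (swp y) hs0 hs1
        rw [swp_swp] at t
        linarith
  -- rewrite lam as a sum over outputs
  have lam_eq : ∀ X : Fin 4 → Fin (n+2) → ZMod 2,
      lam X ε = (1/4) * ∑ y : Fin (n+2) → ZMod 2,
        (1-ε)^(n+2-dmin X y) * ε^(dmin X y) := by
    intro X
    unfold lam
    congr 1
    have hterm : ∀ d : ℕ, (alpha X d : ℝ) * (1-ε)^(n+2-d) * ε^d
        = ∑ y ∈ Finset.univ.filter (fun y : Fin (n+2) → ZMod 2 => dmin X y = d),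
            (1-ε)^(n+2-dmin X y) * ε^(dmin X y) := by
      intro d
      calc (alpha X d : ℝ) * (1-ε)^(n+2-d) * ε^d
          = ((Finset.univ.filter (fun y : Fin (n+2) → ZMod 2 => dmin X y = d)).card : ℝ)
            * ((1-ε)^(n+2-d) * ε^d) := by unfold alpha; ring
        _ = ∑ _y ∈ Finset.univ.filter (fun y : Fin (n+2) → ZMod 2 => dmin X y = d),
            (1-ε)^(n+2-d) * ε^d := by rw [Finset.sum_const, nsmul_eq_mul]
        _ = ∑ y ∈ Finset.univ.filter (fun y : Fin (n+2) → ZMod 2 => dmin X y = d),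
            (1-ε)^(n+2-dmin X y) * ε^(dmin X y) := by
            refine Finset.sum_congr rfl fun y hy => ?_
            rw [(Finset.mem_filter.mp hy).2]
    calc ∑ d ∈ Finset.range (n+2+1), (alpha X d : ℝ) * (1-ε)^(n+2-d) * ε^d
        = ∑ d ∈ Finset.range (n+2+1),
            ∑ y ∈ Finset.univ.filter (fun y : Fin (n+2) → ZMod 2 => dmin X y = d),
              (1-ε)^(n+2-dmin X y) * ε^(dmin X y) :=
          Finset.sum_congr rfl fun d _ => hterm d
      _ = ∑ y : Fin (n+2) → ZMod 2, (1-ε)^(n+2-dmin X y) * ε^(dmin X y) :=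
          Finset.sum_fiberwise_of_maps_to
            (fun y _ => Finset.mem_range.mpr (Nat.lt_succ_of_le (hcard X y))) _
  -- sum over swapped index
  have hsumsw : ∀ X : Fin 4 → Fin (n+2) → ZMod 2,
      ∑ y : Fin (n+2) → ZMod 2, (1-ε)^(n+2-dmin X (swp y)) * ε^(dmin X (swp y))
      = ∑ y : Fin (n+2) → ZMod 2, (1-ε)^(n+2-dmin X y) * ε^(dmin X y) := by
    intro X
    exact Equiv.sum_comp (Function.Involutive.toPerm swp swp_swp)
      (fun y => (1-ε)^(n+2-dmin X y) * ε^(dmin X y))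
  have hsum : ∑ y : Fin (n+2) → ZMod 2, (1-ε)^(n+2-dmin C y) * ε^(dmin C y)
      ≤ ∑ y : Fin (n+2) → ZMod 2, (1-ε)^(n+2-dmin C' y) * ε^(dmin C' y) := by
    have t := Finset.sum_le_sum (fun y (_ : y ∈ (Finset.univ : Finset (Fin (n+2) → ZMod 2))) => hpair y)
    rw [Finset.sum_add_distrib, Finset.sum_add_distrib, hsumsw C, hsumsw C'] at t
    linarith
  rw [lam_eq C, lam_eq C']
  exact mul_le_mul_of_nonneg_left hsum (by norm_num)
end

section
/- Let m ≤ M be positive integers of the same parity, and let w3, w6 be integers with 0 ≤ w3 ≤ m, 0 ≤ w6 ≤ M, w3 + w6 ≥ (m+M)/2 + 1, and w3 − w6 ≥ (m−M)/2 + 1. Then C(m, w3)·C(M, w6) ≤ C(m, (m−M)/2 + w6)·C(M, (M−m)/2 + w3), where C(a,b) denotes the binomial coefficient. -/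
set_option maxHeartbeats 1000000

lemma step9 (m d a c : ℕ) (hac : a ≤ c) (hc : c < m) (hsum : m ≤ a + c) :
    m.choose (c+1) * (m+2*d).choose (a+d) * (m.choose (a+1) * (m+2*d).choose (c+d))
      ≤ m.choose a * (m+2*d).choose (c+d+1) * (m.choose c * (m+2*d).choose (a+d+1)) := by
  have h1 := Nat.choose_succ_right_eq m c
  have h2 := Nat.choose_succ_right_eq m a
  have h3 := Nat.choose_succ_right_eq (m+2*d) (c+d)
  have h4 := Nat.choose_succ_right_eq (m+2*d) (a+d)
  have hcm : c ≤ m := hc.le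
  have ham : a ≤ m := hac.trans hcm
  have hcd : c + d ≤ m + 2*d := by omega
  have had : a + d ≤ m + 2*d := by omega
  zify [hcm, ham, hcd, had] at h1 h2 h3 h4 ⊢
  have hT : (0:ℤ) < ((c:ℤ)+1) * ((a:ℤ)+1) * (((c:ℤ)+d+1) * ((a:ℤ)+d+1)) := by positivity
  refine le_of_mul_le_mul_right ?_ hT
  have hK : (0:ℤ) ≤ (m.choose a : ℤ) * (m.choose c : ℤ) *
      ((m+2*d).choose (a+d) : ℤ) * ((m+2*d).choose (c+d) : ℤ) := by positivity
  have hnum : ((m:ℤ) - c) * ((m:ℤ) - a) * (((a:ℤ)+d+1) * ((c:ℤ)+d+1)) ≤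
      ((m:ℤ) + d - c) * ((m:ℤ) + d - a) * (((c:ℤ)+1) * ((a:ℤ)+1)) := by
    have hfac : ((m:ℤ) + d - c) * ((m:ℤ) + d - a) * (((c:ℤ)+1) * ((a:ℤ)+1))
        - ((m:ℤ) - c) * ((m:ℤ) - a) * (((a:ℤ)+d+1) * ((c:ℤ)+d+1))
        = (d:ℤ) * ((a:ℤ) + c + 1 - m) * (((m:ℤ)+1) * ((a:ℤ)+(c:ℤ)+2+(d:ℤ)) - 2*((c:ℤ)+1)*((a:ℤ)+1)) := by
      ring
    have h5 : (0:ℤ) ≤ (a:ℤ) + c + 1 - m := by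
      have : (m:ℤ) ≤ (a:ℤ) + c := by exact_mod_cast hsum
      linarith
    have h6 : (0:ℤ) ≤ ((m:ℤ)+1) * ((a:ℤ)+(c:ℤ)+2+(d:ℤ)) - 2*((c:ℤ)+1)*((a:ℤ)+1) := by
      have hc' : (c:ℤ)+1 ≤ (m:ℤ)+1 := by exact_mod_cast Nat.succ_le_succ hcm
      have ha' : (a:ℤ)+1 ≤ (m:ℤ)+1 := by exact_mod_cast Nat.succ_le_succ ham
      nlinarith [mul_le_mul_of_nonneg_left hc' (by positivity : (0:ℤ) ≤ (a:ℤ)+1),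
        mul_le_mul_of_nonneg_left ha' (by positivity : (0:ℤ) ≤ (c:ℤ)+1)]
    nlinarith [mul_nonneg (mul_nonneg (by positivity : (0:ℤ) ≤ (d:ℤ)) h5) h6]
  calc ((m.choose (c+1) : ℤ) * ((m+2*d).choose (a+d) : ℤ) *
          ((m.choose (a+1) : ℤ) * ((m+2*d).choose (c+d) : ℤ))) *
        (((c:ℤ)+1) * ((a:ℤ)+1) * (((c:ℤ)+d+1) * ((a:ℤ)+d+1)))
      = ((m.choose a : ℤ) * (m.choose c : ℤ) * ((m+2*d).choose (a+d) : ℤ) *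
          ((m+2*d).choose (c+d) : ℤ)) *
        (((m:ℤ) - c) * ((m:ℤ) - a) * (((a:ℤ)+d+1) * ((c:ℤ)+d+1))) := by
        linear_combination (((m+2*d).choose (a+d) : ℤ) * ((m+2*d).choose (c+d) : ℤ) *
            (((c:ℤ)+d+1) * ((a:ℤ)+d+1)) * ((m.choose (a+1) : ℤ) * ((a:ℤ)+1))) * h1 +
          (((m+2*d).choose (a+d) : ℤ) * ((m+2*d).choose (c+d) : ℤ) *
            (((c:ℤ)+d+1) * ((a:ℤ)+d+1)) * ((m.choose c : ℤ) * ((m:ℤ) - c))) * h2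
    _ ≤ ((m.choose a : ℤ) * (m.choose c : ℤ) * ((m+2*d).choose (a+d) : ℤ) *
          ((m+2*d).choose (c+d) : ℤ)) *
        (((m:ℤ) + d - c) * ((m:ℤ) + d - a) * (((c:ℤ)+1) * ((a:ℤ)+1))) := by
        exact mul_le_mul_of_nonneg_left hnum hK
    _ = ((m.choose a : ℤ) * ((m+2*d).choose (c+d+1) : ℤ) *
          ((m.choose c : ℤ) * ((m+2*d).choose (a+d+1) : ℤ))) *
        (((c:ℤ)+1) * ((a:ℤ)+1) * (((c:ℤ)+d+1) * ((a:ℤ)+d+1))) := by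
        linear_combination (-((m.choose a : ℤ) * (m.choose c : ℤ) * (((c:ℤ)+1) * ((a:ℤ)+1)) *
            (((m+2*d).choose (a+d+1) : ℤ) * ((a:ℤ)+d+1)))) * h3 +
          (-((m.choose a : ℤ) * (m.choose c : ℤ) * (((c:ℤ)+1) * ((a:ℤ)+1)) *
            (((m+2*d).choose (c+d) : ℤ) * ((m:ℤ)+d-c)))) * h4

lemma key9 (m d : ℕ) : ∀ n a b, b = a + n → b ≤ m → m + 1 ≤ a + b →
    m.choose b * (m+2*d).choose (a+d) ≤ m.choose a * (m+2*d).choose (b+d) := by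
  intro n
  induction n using Nat.strong_induction_on with
  | _ n ih =>
    intro a b hb hbm hsum
    subst hb
    rcases n with _ | _ | k
    · simp
    · 
      have hstep := step9 m d a a le_rfl (by omega) (by omega)
      have : (m.choose (a+1) * (m+2*d).choose (a+d)) * (m.choose (a+1) * (m+2*d).choose (a+d))
          ≤ (m.choose a * (m+2*d).choose (a+d+1)) * (m.choose a * (m+2*d).choose (a+d+1)) := by
        calc _ = m.choose (a+1) * (m+2*d).choose (a+d) * (m.choose (a+1) * (m+2*d).choose (a+d)) := by ring
          _ ≤ m.choose a * (m+2*d).choose (a+d+1) * (m.choose a * (m+2*d).choose (a+d+1)) := hstep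
          _ = _ := by ring
      have h' := Nat.mul_self_le_mul_self_iff.mp this
      have e : a + 1 + d = a + d + 1 := by omega
      rw [e]
      exact h'
    · have hih := ih k (by omega) (a+1) (a+1+k) rfl (by omega) (by omega)
      have hstep := step9 m d a (a+k+1) (by omega) (by omega) (by omega)
      have e1 : a + (k + 1 + 1) = a + k + 1 + 1 := by omega
      have e2 : a + k + 1 + 1 + d = a + k + 1 + d + 1 := by omega
      have e3 : a + 1 + k = a + k + 1 := by omega
      have e4 : a + 1 + k + d = a + k + 1 + d := by omega
      have e5 : a + 1 + d = a + d + 1 := by omega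
      rw [e1, e2]
      rw [e3, e5] at hih
      -- hih : m.choose (a+k+1) * CM (a+d+1) ≤ m.choose (a+1) * CM (a+k+1+d)
      -- hstep : X * V ≤ Y * U
      have hV : 0 < m.choose (a+1) * (m+2*d).choose (a+k+1+d) :=
        Nat.mul_pos (Nat.choose_pos (by omega)) (Nat.choose_pos (by omega))
      refine Nat.le_of_mul_le_mul_right ?_ hV
      calc m.choose (a+k+1+1) * (m+2*d).choose (a+d) * (m.choose (a+1) * (m+2*d).choose (a+k+1+d))
          ≤ m.choose a * (m+2*d).choose (a+k+1+d+1) * (m.choose (a+k+1) * (m+2*d).choose (a+d+1)) := hstep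
        _ ≤ m.choose a * (m+2*d).choose (a+k+1+d+1) * (m.choose (a+1) * (m+2*d).choose (a+k+1+d)) :=
            Nat.mul_le_mul_left _ hih

/-- Binomial coefficient rearrangement inequality on the index set `W₅`:
with `m ≤ M` of the same parity, `w3 + w6 ≥ (m+M)/2 + 1` and
`w3 − w6 ≥ (m−M)/2 + 1` (written without subtraction as
`2(w3+w6) ≥ m+M+2` and `2w3 + M ≥ 2w6 + m + 2`), we have
`C(m,w3)C(M,w6) ≤ C(m,(m−M)/2+w6) C(M,(M−m)/2+w3)`. -/
theorem stmt9 (m M w3 w6 : ℕ) (hm : 0 < m) (hmM : m ≤ M) (hpar : m % 2 = M % 2)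
    (h3 : w3 ≤ m) (h6 : w6 ≤ M)
    (hsum : m + M + 2 ≤ 2 * (w3 + w6))
    (hdiff : 2 * w6 + m + 2 ≤ 2 * w3 + M) :
    m.choose w3 * M.choose w6 ≤
      m.choose (w6 - (M - m) / 2) * M.choose (w3 + (M - m) / 2) := by
  obtain ⟨d, rfl⟩ : ∃ d, M = m + 2*d := ⟨(M-m)/2, by omega⟩
  have hd : (m + 2*d - m)/2 = d := by omega
  rw [hd]
  have h := key9 m d (w3 - (w6 - d)) (w6 - d) w3 (by omega) h3 (by omega)
  rw [show (w6 - d) + d = w6 from by omega] at h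
  exact h
end

section
/- Let m ≤ M be positive even integers (or more generally of the same parity), and set ŵ3 = w3 − m/2, ŵ6 = w6 − M/2 with ŵ3 + ŵ6 ≥ 1 and ŵ3 − ŵ6 ≥ 1. Then the ratio [C(m, m/2 + ŵ3)·C(M, M/2 + ŵ6)] / [C(m, m/2 + ŵ6)·C(M, M/2 + ŵ3)] equals the product over i = 1 to ŵ3 − ŵ6 of [(m/2 + i)(M/2 + i) − ŵ3ŵ6 + (m/2 + i)ŵ6 − ŵ3(M/2 + i)] / [(m/2 + i)(M/2 + i) − ŵ3ŵ6 − (m/2 + i)ŵ3 + ŵ6(M/2 + i)], and this product is at most 1. -/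
open Finset

private lemma choose_ratio (n r : ℕ) : ∀ (k : ℕ), r + k ≤ n →
    (n.choose (r + k) : ℝ) * ∏ i ∈ Icc 1 k, ((r : ℝ) + i) =
    (n.choose r : ℝ) * ∏ i ∈ Icc 1 k, ((n : ℝ) - r - i + 1) := by
  intro k
  induction k with
  | zero => simp
  | succ k ih =>
    intro h
    have h' : r + k ≤ n := by omega
    have hk := ih h'
    have hre : r + (k + 1) = r + k + 1 := rfl
    rw [hre, Finset.prod_Icc_succ_top (by omega), Finset.prod_Icc_succ_top (by omega)]
    have key : (n.choose (r + k + 1) : ℝ) * ((r : ℝ) + k + 1)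
        = (n.choose (r + k) : ℝ) * ((n : ℝ) - r - k) := by
      have h1 := Nat.choose_succ_right_eq n (r + k)
      have h2 : ((n.choose (r + k) * (n - (r + k)) : ℕ) : ℝ)
          = (n.choose (r + k) : ℝ) * ((n : ℝ) - r - k) := by
        push_cast [Nat.cast_sub h']
        ring
      calc (n.choose (r + k + 1) : ℝ) * ((r : ℝ) + k + 1)
          = ((n.choose (r + k + 1) * (r + k + 1) : ℕ) : ℝ) := by push_cast; ring
        _ = _ := by rw [h1]; exact h2
    push_cast
    push_cast at hk key
    linear_combination (∏ i ∈ Icc 1 k, ((r:ℝ) + i)) * key + ((n:ℝ) - r - k) * hk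

private lemma prod_reflect (k : ℕ) (f : ℝ → ℝ) :
    ∏ i ∈ Icc 1 k, f (i : ℝ) = ∏ i ∈ Icc 1 k, f ((k : ℝ) + 1 - (i : ℝ)) := by
  refine Finset.prod_nbij' (fun i => k + 1 - i) (fun i => k + 1 - i) ?_ ?_ ?_ ?_ ?_
  · intro a ha; simp only [Finset.mem_Icc] at *; omega
  · intro a ha; simp only [Finset.mem_Icc] at *; omega
  · intro a ha; simp only [Finset.mem_Icc] at *; omega
  · intro a ha; simp only [Finset.mem_Icc] at *; omega
  · intro a ha
    simp only [Finset.mem_Icc] at ha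
    congr 1
    have : ((k + 1 - a : ℕ) : ℝ) = (k : ℝ) + 1 - a := by
      have : a ≤ k + 1 := by omega
      push_cast [Nat.cast_sub this]
      ring
    rw [this]
    ring

/-- The ratio of products of binomial coefficients equals the displayed product of
factors, and that product is at most 1.  Here `ŵ3 = w3 − m/2`, `ŵ6 = w6 − M/2`,
the hypotheses `ŵ3 + ŵ6 ≥ 1`, `ŵ3 − ŵ6 ≥ 1` are written without subtraction, and
`C(m, m/2 + ŵ3) = C(m, w3)`, `C(m, m/2 + ŵ6) = C(m, w6 − (M−m)/2)`,
`C(M, M/2 + ŵ3) = C(M, w3 + (M−m)/2)`, `C(M, M/2 + ŵ6) = C(M, w6)`. -/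
theorem stmt10 (m M w3 w6 : ℕ) (hm : 0 < m) (hmM : m ≤ M)
    (hem : Even m) (heM : Even M)
    (h3 : w3 ≤ m) (h6 : w6 ≤ M)
    (hsum : m + M + 2 ≤ 2 * (w3 + w6))
    (hdiff : 2 * w6 + m + 2 ≤ 2 * w3 + M) :
    ((m.choose w3 : ℝ) * M.choose w6) /
        ((m.choose (w6 - (M - m) / 2) : ℝ) * M.choose (w3 + (M - m) / 2)) =
      (∏ i ∈ Finset.Icc 1 (w3 + (M - m) / 2 - w6),
        (((m:ℝ)/2 + i) * ((M:ℝ)/2 + i) - ((w3:ℝ) - (m:ℝ)/2) * ((w6:ℝ) - (M:ℝ)/2)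
            + ((m:ℝ)/2 + i) * ((w6:ℝ) - (M:ℝ)/2) - ((w3:ℝ) - (m:ℝ)/2) * ((M:ℝ)/2 + i)) /
        (((m:ℝ)/2 + i) * ((M:ℝ)/2 + i) - ((w3:ℝ) - (m:ℝ)/2) * ((w6:ℝ) - (M:ℝ)/2)
            - ((m:ℝ)/2 + i) * ((w3:ℝ) - (m:ℝ)/2) + ((w6:ℝ) - (M:ℝ)/2) * ((M:ℝ)/2 + i))) ∧
    (∏ i ∈ Finset.Icc 1 (w3 + (M - m) / 2 - w6),
        (((m:ℝ)/2 + i) * ((M:ℝ)/2 + i) - ((w3:ℝ) - (m:ℝ)/2) * ((w6:ℝ) - (M:ℝ)/2)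
            + ((m:ℝ)/2 + i) * ((w6:ℝ) - (M:ℝ)/2) - ((w3:ℝ) - (m:ℝ)/2) * ((M:ℝ)/2 + i)) /
        (((m:ℝ)/2 + i) * ((M:ℝ)/2 + i) - ((w3:ℝ) - (m:ℝ)/2) * ((w6:ℝ) - (M:ℝ)/2)
            - ((m:ℝ)/2 + i) * ((w3:ℝ) - (m:ℝ)/2) + ((w6:ℝ) - (M:ℝ)/2) * ((M:ℝ)/2 + i))) ≤ 1 := by
  obtain ⟨a, ha⟩ := hem
  obtain ⟨A, hA⟩ := heM
  set d : ℕ := (M - m) / 2 with hd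
  set u : ℕ := w6 - d with hu
  set k : ℕ := w3 + d - w6 with hk
  -- basic nat facts
  have hdA : d = A - a := by omega
  have f1 : w3 = u + k := by omega
  have f2 : w6 + k = w3 + d := by omega
  have f3 : 1 ≤ u := by omega
  have f4 : 1 ≤ k := by omega
  have f5 : u + k ≤ m := by omega
  have f6 : w6 + k ≤ M := by omega
  have f7 : w6 = u + d := by omega
  have f8 : M = m + 2 * d := by omega
  have f9 : m + 1 ≤ 2 * u + k := by omega
  -- real cast facts
  have hmR : (m : ℝ) = 2 * a := by rw [ha]; push_cast; ring
  have hMR : (M : ℝ) = (m : ℝ) + 2 * d := by rw [f8]; push_cast; ring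
  have hw3R : (w3 : ℝ) = (u : ℝ) + k := by rw [f1]; push_cast; ring
  have hw6R : (w6 : ℝ) = (u : ℝ) + d := by rw [f7]; push_cast; ring
  -- rewrite each factor in factored form
  have hfac : ∀ i ∈ Icc 1 k,
      ((((m:ℝ)/2 + i) * ((M:ℝ)/2 + i) - ((w3:ℝ) - (m:ℝ)/2) * ((w6:ℝ) - (M:ℝ)/2)
            + ((m:ℝ)/2 + i) * ((w6:ℝ) - (M:ℝ)/2) - ((w3:ℝ) - (m:ℝ)/2) * ((M:ℝ)/2 + i)) /
        (((m:ℝ)/2 + i) * ((M:ℝ)/2 + i) - ((w3:ℝ) - (m:ℝ)/2) * ((w6:ℝ) - (M:ℝ)/2)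
            - ((m:ℝ)/2 + i) * ((w3:ℝ) - (m:ℝ)/2) + ((w6:ℝ) - (M:ℝ)/2) * ((M:ℝ)/2 + i)))
      = (((m:ℝ) - u + i - k) * ((w6:ℝ) + i)) / (((u:ℝ) + i) * ((M:ℝ) - w6 + i - k)) := by
    intro i hi
    rw [hw3R, hw6R, hMR, hmR]
    congr 1 <;> ring
  -- positivity of all linear factors on Icc 1 k
  have hpos : ∀ i ∈ Icc 1 k, (0 : ℝ) < (m : ℝ) - u + i - k ∧ (0 : ℝ) < (w6 : ℝ) + i ∧
      (0 : ℝ) < (u : ℝ) + i ∧ (0 : ℝ) < (M : ℝ) - w6 + i - k ∧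
      (0 : ℝ) < (m : ℝ) - u - i + 1 ∧ (0 : ℝ) < (M : ℝ) - w6 - i + 1 := by
    intro i hi
    simp only [Finset.mem_Icc] at hi
    have h1 : (1 : ℝ) ≤ i := by exact_mod_cast hi.1
    have h2 : (i : ℝ) ≤ k := by exact_mod_cast hi.2
    have c5 : (u : ℝ) + k ≤ m := by exact_mod_cast f5
    have c6 : (w6 : ℝ) + k ≤ M := by exact_mod_cast f6
    refine ⟨by linarith, by linarith, by linarith, by linarith, by linarith, by linarith⟩
  -- choose_ratio instances
  have hA1 := choose_ratio m u k f5
  rw [← f1] at hA1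
  have hA2 := choose_ratio M w6 k f6
  rw [f2] at hA2
  -- products
  set P1 : ℝ := ∏ i ∈ Icc 1 k, ((m : ℝ) - u - i + 1) with hP1
  set P2 : ℝ := ∏ i ∈ Icc 1 k, ((w6 : ℝ) + i) with hP2
  set Q1 : ℝ := ∏ i ∈ Icc 1 k, ((u : ℝ) + i) with hQ1
  set Q2 : ℝ := ∏ i ∈ Icc 1 k, ((M : ℝ) - w6 - i + 1) with hQ2
  have hP1pos : 0 < P1 := Finset.prod_pos (fun i hi => (hpos i hi).2.2.2.2.1)
  have hP2pos : 0 < P2 := Finset.prod_pos (fun i hi => (hpos i hi).2.1)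
  have hQ1pos : 0 < Q1 := Finset.prod_pos (fun i hi => (hpos i hi).2.2.1)
  have hQ2pos : 0 < Q2 := Finset.prod_pos (fun i hi => (hpos i hi).2.2.2.2.2)
  have hc1 : 0 < (m.choose u : ℝ) := by
    exact_mod_cast Nat.choose_pos (by omega : u ≤ m)
  have hc2 : 0 < (M.choose (w3 + d) : ℝ) := by
    exact_mod_cast Nat.choose_pos (by omega : w3 + d ≤ M)
  -- reflection identities
  have hr1 : (∏ i ∈ Icc 1 k, ((m : ℝ) - u + i - k)) = P1 := by
    rw [hP1, prod_reflect k (fun x => (m : ℝ) - u + x - k)]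
    exact Finset.prod_congr rfl (fun i _ => by ring)
  have hr2 : (∏ i ∈ Icc 1 k, ((M : ℝ) - w6 + i - k)) = Q2 := by
    rw [hQ2, prod_reflect k (fun x => (M : ℝ) - w6 + x - k)]
    exact Finset.prod_congr rfl (fun i _ => by ring)
  constructor
  · rw [Finset.prod_congr rfl hfac, Finset.prod_div_distrib, Finset.prod_mul_distrib,
      Finset.prod_mul_distrib, hr1, hr2]
    rw [div_eq_div_iff (by positivity) (by positivity)]
    linear_combination ((M.choose w6 : ℝ) * Q2) * hA1 - ((m.choose u : ℝ) * P1) * hA2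
  · rw [Finset.prod_congr rfl hfac]
    apply Finset.prod_le_one
    · intro i hi
      obtain ⟨p1, p2, p3, p4, _, _⟩ := hpos i hi
      exact le_of_lt (div_pos (mul_pos p1 p2) (mul_pos p3 p4))
    · intro i hi
      obtain ⟨p1, p2, p3, p4, _, _⟩ := hpos i hi
      rw [div_le_one (mul_pos p3 p4)]
      have hdiffR : ((u : ℝ) + i) * ((M : ℝ) - w6 + i - k) - ((m : ℝ) - u + i - k) * ((w6 : ℝ) + i)
          = (d : ℝ) * (2 * (u : ℝ) + (k : ℝ) - (m : ℝ)) := by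
        rw [hw6R, hMR]; ring
      have c9 : (m : ℝ) + 1 ≤ 2 * (u : ℝ) + (k : ℝ) := by exact_mod_cast f9
      have hdnn : (0 : ℝ) ≤ (d : ℝ) := Nat.cast_nonneg d
      have hnn : (0 : ℝ) ≤ (d : ℝ) * (2 * (u : ℝ) + (k : ℝ) - (m : ℝ)) :=
        mul_nonneg hdnn (by linarith)
      linarith
end

section
/- Let C and C' be two (n,2) codes for which {0,1}^n admits partitions {Y_1,...,Y_5} and {Y_1', ..., Y_5'} with bijections g_i : Y_i → Y_i' such that d_C(y) = d_{C'}(g_i(y)) for y ∈ Y_1, Y_2, Y_4; d_C(y) = d_{C'}(g_3(y)) + 1 for y ∈ Y_3; and d_C(y) + 1 = d_{C'}(g_5(y)) for y ∈ Y_5. Define α_d^i(C) = |{y ∈ Y_i : d_C(y) = d}|. Then λ_{C'} ≥ λ_C (for crossover probability ε ∈ (0,1/2)) if and only if Σ_{d=1}^n [α_d^3(C) − α_{d−1}^5(C)] (ε/(1−ε))^{d−1} ≥ 0. -/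
open Finset

/-!
Write `w d = (1-ε)^(n-d) ε^d`, so that `4 λ_C = Σ_y w (d_C y)`. Transporting the sum for `C'`
along the bijections `g_i`, the parts `Y₁, Y₂, Y₄` cancel and
`4 (λ_{C'} - λ_C) = Σ_{Y₃} (w (d-1) - w d) - Σ_{Y₅} (w d - w (d+1))`.
Since `w d - w (d+1) = (1-2ε)(1-ε)^(n-1) (ε/(1-ε))^d` and `1 - 2ε > 0`, the sign of
`λ_{C'} - λ_C` is that of `Σ_{Y₃} (ε/(1-ε))^(d-1) - Σ_{Y₅} (ε/(1-ε))^d`, which is the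
weighted sum of the statement regrouped by distance.
-/

section Finset

variable {α ι M : Type*} [AddCommMonoid M]

theorem Finset.sum_univ_eq_sum_sum_of_existsUnique_mem [Fintype α] [Fintype ι]
    (Z : ι → Finset α) (hZ : ∀ y, ∃! i, y ∈ Z i) (f : α → M) : ∑ y, f y = ∑ i, ∑ y ∈ Z i, f y := by
  classical
  choose σ hσ using fun y => (hZ y).exists
  have hfiber : ∀ i, Z i = univ.filter (σ · = i) := fun i => by
    ext y
    simp only [mem_filter, mem_univ, true_and]
    exact ⟨fun hy => (hZ y).unique (hσ y) hy, fun h => h ▸ hσ y⟩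
  rw [← sum_fiberwise univ σ f]
  exact sum_congr rfl fun i _ => by rw [hfiber]

theorem Finset.sum_univ_eq_sum_sum_comp_of_bijOn [Fintype α] [Fintype ι] (Z Z' : ι → Finset α)
    (hZ' : ∀ y, ∃! i, y ∈ Z' i) (g : ι → α → α) (hg : ∀ i, Set.BijOn (g i) (Z i) (Z' i))
    (f : α → M) : ∑ y, f y = ∑ i, ∑ y ∈ Z i, f (g i y) := by
  rw [sum_univ_eq_sum_sum_of_existsUnique_mem Z' hZ']
  refine sum_congr rfl fun i _ => (sum_nbij (g i) (fun y hy => (hg i).mapsTo hy)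
    (hg i).injOn (hg i).surjOn fun _ _ => rfl).symm

theorem Finset.sum_card_filter_mul {β R : Type*} [DecidableEq β] [NonAssocSemiring R]
    {s : Finset α} {t : Finset β} {f : α → β} (h : ∀ a ∈ s, f a ∈ t) (u : β → R) :
    ∑ b ∈ t, (#(s.filter (f · = b)) : R) * u b = ∑ a ∈ s, u (f a) := by
  simp_rw [← sum_fiberwise_of_maps_to' h u, sum_const, nsmul_eq_mul]

theorem Finset.sum_Icc_card_filter_eq_pred_mul {R : Type*} [NonAssocSemiring R] {s : Finset α}
    {f : α → ℕ} {n : ℕ} (h : ∀ a ∈ s, f a + 1 ≤ n) (u : ℕ → R) :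
    ∑ d ∈ Icc 1 n, (#(s.filter (f · = d - 1)) : R) * u (d - 1) = ∑ a ∈ s, u (f a) := by
  calc ∑ d ∈ Icc 1 n, (#(s.filter (f · = d - 1)) : R) * u (d - 1)
      = ∑ d ∈ Icc 1 n, (#(s.filter (f · + 1 = d)) : R) * u (d - 1) :=
        sum_congr rfl fun d hd => by
          have := (mem_Icc.1 hd).1
          congr 3
          exact filter_congr fun y _ => by omega
    _ = ∑ a ∈ s, u (f a + 1 - 1) :=
        sum_card_filter_mul (fun a ha => mem_Icc.2 ⟨by omega, h a ha⟩) fun d => u (d - 1)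
    _ = ∑ a ∈ s, u (f a) := by simp only [Nat.add_sub_cancel]

end Finset

variable {m : ℕ}

/-- Probability that the binary symmetric channel with crossover `ε` turns a word of length `m`
into one at Hamming distance `d`. -/
def bscProb (m d : ℕ) (ε : ℝ) : ℝ := (1 - ε) ^ (m - d) * ε ^ d

theorem lam_eq_sum_bscProb (C : Fin 4 → Fin m → ZMod 2) (ε : ℝ) :
    lam C ε = (1 / 4) * ∑ y, bscProb m (dmin C y) ε := by
  rw [lam, ← sum_card_filter_mul (t := range (m + 1))
    (fun y _ => mem_range_succ_iff.2 (dmin_le C y)) fun d => bscProb m d ε]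
  simp only [alpha, bscProb, mul_assoc]

theorem bscProb_sub_bscProb_succ {d : ℕ} (hd : d < m) {ε : ℝ} (hε : ε ≠ 1) :
    bscProb m d ε - bscProb m (d + 1) ε =
      (1 - 2 * ε) * (1 - ε) ^ (m - 1) * (ε / (1 - ε)) ^ d := by
  have hε' : (1 : ℝ) - ε ≠ 0 := sub_ne_zero.2 hε.symm
  obtain ⟨k, rfl⟩ := Nat.exists_eq_add_of_lt hd
  rw [bscProb, bscProb, show d + k + 1 - d = k + 1 by omega, show d + k + 1 - (d + 1) = k by omega,
    show d + k + 1 - 1 = k + d by omega, div_pow]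
  field_simp
  ring

section Shift

variable {C C' : Fin 4 → Fin m → ZMod 2} {s : Finset (Fin m → ZMod 2)}
  {g : (Fin m → ZMod 2) → Fin m → ZMod 2} {ε : ℝ}

theorem sum_bscProb_sub_of_dmin_eq_succ (h : ∀ y ∈ s, dmin C y = dmin C' (g y) + 1)
    (hε : ε ≠ 1) :
    ∑ y ∈ s, (bscProb m (dmin C' (g y)) ε - bscProb m (dmin C y) ε) =
      (1 - 2 * ε) * (1 - ε) ^ (m - 1) * ∑ y ∈ s, (ε / (1 - ε)) ^ (dmin C y - 1) := by
  rw [mul_sum]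
  refine sum_congr rfl fun y hy => ?_
  have hlt : dmin C' (g y) < m := by have := dmin_le C y; rw [h y hy] at this; omega
  rw [h y hy, Nat.add_sub_cancel, bscProb_sub_bscProb_succ hlt hε]

theorem sum_bscProb_sub_of_succ_eq_dmin (h : ∀ y ∈ s, dmin C y + 1 = dmin C' (g y))
    (hε : ε ≠ 1) :
    ∑ y ∈ s, (bscProb m (dmin C' (g y)) ε - bscProb m (dmin C y) ε) =
      -((1 - 2 * ε) * (1 - ε) ^ (m - 1) * ∑ y ∈ s, (ε / (1 - ε)) ^ dmin C y) := by
  rw [mul_sum, ← sum_neg_distrib]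
  refine sum_congr rfl fun y hy => ?_
  have hlt : dmin C y < m := by have := dmin_le C' (g y); rw [← h y hy] at this; omega
  rw [← h y hy, ← neg_sub, bscProb_sub_bscProb_succ hlt hε]

end Shift

theorem stmt14_general (n : ℕ) (C C' : Fin 4 → Fin n → ZMod 2)
    (Y Y' : Fin 5 → Finset (Fin n → ZMod 2))
    (hY : ∀ y : Fin n → ZMod 2, ∃! i : Fin 5, y ∈ Y i)
    (hY' : ∀ y : Fin n → ZMod 2, ∃! i : Fin 5, y ∈ Y' i)
    (g : Fin 5 → (Fin n → ZMod 2) → (Fin n → ZMod 2))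
    (hg : ∀ i, Set.BijOn (g i) (Y i : Set (Fin n → ZMod 2)) (Y' i : Set (Fin n → ZMod 2)))
    (h1 : ∀ y ∈ Y 0, dmin C y = dmin C' (g 0 y))
    (h2 : ∀ y ∈ Y 1, dmin C y = dmin C' (g 1 y))
    (h4 : ∀ y ∈ Y 3, dmin C y = dmin C' (g 3 y))
    (h3 : ∀ y ∈ Y 2, dmin C y = dmin C' (g 2 y) + 1)
    (h5 : ∀ y ∈ Y 4, dmin C y + 1 = dmin C' (g 4 y))
    (ε : ℝ) (hε2 : ε < 1/2) :
    lam C ε ≤ lam C' ε ↔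
      0 ≤ ∑ d ∈ Finset.Icc 1 n,
        ((((Y 2).filter (fun y => dmin C y = d)).card : ℝ) -
          (((Y 4).filter (fun y => dmin C y = d - 1)).card : ℝ)) * (ε/(1-ε))^(d-1) := by
  have hε : ε ≠ 1 := by linarith
  have hc : 0 < 1 / 4 * ((1 - 2 * ε) * (1 - ε) ^ (n - 1)) := by
    have : 0 < 1 - 2 * ε := by linarith
    have : 0 < 1 - ε := by linarith
    positivity
  have hdiff : lam C' ε - lam C ε = 1 / 4 * ((1 - 2 * ε) * (1 - ε) ^ (n - 1)) *
      (∑ y ∈ Y 2, (ε / (1 - ε)) ^ (dmin C y - 1) -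
        ∑ y ∈ Y 4, (ε / (1 - ε)) ^ dmin C y) := by
    have hsame : ∀ i, (∀ y ∈ Y i, dmin C y = dmin C' (g i y)) →
        ∑ y ∈ Y i, (bscProb n (dmin C' (g i y)) ε - bscProb n (dmin C y) ε) = 0 :=
      fun i h => sum_eq_zero fun y hy => by rw [h y hy, sub_self]
    rw [lam_eq_sum_bscProb, lam_eq_sum_bscProb, sum_univ_eq_sum_sum_comp_of_bijOn Y Y' hY' g hg,
      sum_univ_eq_sum_sum_of_existsUnique_mem Y hY, ← mul_sub, ← sum_sub_distrib]
    simp_rw [← sum_sub_distrib]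
    rw [Fin.sum_univ_five, hsame 0 h1, hsame 1 h2, hsame 3 h4,
      sum_bscProb_sub_of_dmin_eq_succ h3 hε, sum_bscProb_sub_of_succ_eq_dmin h5 hε]
    ring
  have hY3 : ∀ y ∈ Y 2, dmin C y ∈ Icc 1 n := fun y hy =>
    mem_Icc.2 ⟨by rw [h3 y hy]; omega, dmin_le C y⟩
  have hY5 : ∀ y ∈ Y 4, dmin C y + 1 ≤ n := fun y hy => h5 y hy ▸ dmin_le C' (g 4 y)
  rw [← sub_nonneg, hdiff, sum_congr rfl fun d _ => sub_mul .., sum_sub_distrib,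
    sum_card_filter_mul hY3 fun d => (ε / (1 - ε)) ^ (d - 1),
    sum_Icc_card_filter_eq_pred_mul hY5 fun d => (ε / (1 - ε)) ^ d]
  exact mul_nonneg_iff_of_pos_left hc

/-- Theorem 3 of the paper: given the partitions `{Y_i}` and `{Y_i'}` of `{0,1}^n`
with bijections `g_i` matching distances (equal on `Y₁, Y₂, Y₄`, shifted down by 1
on `Y₃`, shifted up by 1 on `Y₅`), `λ_{C'} ≥ λ_C` iff the weighted sum
`Σ_d [α_d^3 − α_{d−1}^5](ε/(1−ε))^{d−1}` is nonnegative. -/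
theorem stmt14 (n : ℕ) (C C' : Fin 4 → Fin n → ZMod 2)
    (Y Y' : Fin 5 → Finset (Fin n → ZMod 2))
    (hY : ∀ y : Fin n → ZMod 2, ∃! i : Fin 5, y ∈ Y i)
    (hY' : ∀ y : Fin n → ZMod 2, ∃! i : Fin 5, y ∈ Y' i)
    (g : Fin 5 → (Fin n → ZMod 2) → (Fin n → ZMod 2))
    (hg : ∀ i, Set.BijOn (g i) (Y i : Set (Fin n → ZMod 2)) (Y' i : Set (Fin n → ZMod 2)))
    (h1 : ∀ y ∈ Y 0, dmin C y = dmin C' (g 0 y))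
    (h2 : ∀ y ∈ Y 1, dmin C y = dmin C' (g 1 y))
    (h4 : ∀ y ∈ Y 3, dmin C y = dmin C' (g 3 y))
    (h3 : ∀ y ∈ Y 2, dmin C y = dmin C' (g 2 y) + 1)
    (h5 : ∀ y ∈ Y 4, dmin C y + 1 = dmin C' (g 4 y))
    (ε : ℝ) (hε1 : 0 < ε) (hε2 : ε < 1/2) :
    lam C ε ≤ lam C' ε ↔
      0 ≤ ∑ d ∈ Finset.Icc 1 n,
        ((((Y 2).filter (fun y => dmin C y = d)).card : ℝ) -
          (((Y 4).filter (fun y => dmin C y = d - 1)).card : ℝ)) * (ε/(1-ε))^(d-1) :=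
  stmt14_general n C C' Y Y' hY hY' g hg h1 h2 h4 h3 h5 ε hε2
end
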